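/- (Upper estimate) Let R > q > p > 1 and f(z) = Σ_{k≥0} c_k z^k analytic in D_R = {|z| < R}. Fix 1 ≤ r < p·r_1/q < p·R/q. Then for all |z| ≤ r and n ∈ ℕ, |L_{n,p,q}(f)(z) - f(z)| ≤ (p^n/[n]_{p,q}) · M_{r_1,p,q}(f), where M_{r_1,p,q}(f) = (p(q-p+1)/(q-p)^2) · Σ_{k=0}^{∞} |c_k|(k+1)r_1^k < ∞. -/

import Mathlib

/-!
Expanding `f = Σ c_k z^k`, the `(p,q)`-derivative acts on coefficients by
`c_{j+1} ↦ [j+1]_{p,q} c_{j+1}`, so `D_{p,q}^{(k)} f(0) = [k]_{p,q}! c_k` and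
`L_{n,p,q}(f)(z) = Σ_k λ_{n,k} c_k z^k` with
`λ_{n,k} = ∏_{j<k} q^j [n-j]_{p,q} / [n]_{p,q} ∈ [0,1]`. By `[n] = q^j [n-j] + p^{n-j} [j]`, each
factor falls short of `1` by at most `p^n (q/p)^j / ((q-p) [n])`, so a geometric sum gives
`1 - λ_{n,k} ≤ p^{n+1} (q/p)^k / ((q-p)^2 [n])`. As `q|z|/p ≤ r₁`, summing against `|c_k| |z|^k`
yields the estimate even without the factor `(q-p+1)(k+1) ≥ 1`.
-/

/-- The `(p,q)`-integer `[n]_{p,q} = (q^n - p^n)/(q - p)`. -/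
noncomputable def pqInt (p q : ℝ) (n : ℕ) : ℝ := (q ^ n - p ^ n) / (q - p)

/-- The `(p,q)`-factorial `[n]_{p,q}! = [1]_{p,q}·[2]_{p,q}···[n]_{p,q}`. -/
noncomputable def pqFact (p q : ℝ) : ℕ → ℝ
  | 0 => 1
  | n + 1 => pqFact p q n * pqInt p q (n + 1)

/-- The `(p,q)`-binomial coefficient. -/
noncomputable def pqBinom (p q : ℝ) (n k : ℕ) : ℝ :=
  pqFact p q n / (pqFact p q k * pqFact p q (n - k))

/-- The `(p,q)`-derivative, with `D_{p,q}f(0) = f'(0)`. -/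
noncomputable def pqDeriv (p q : ℝ) (f : ℂ → ℂ) (x : ℂ) : ℂ :=
  if x = 0 then deriv f 0 else (f ((p : ℂ) * x) - f ((q : ℂ) * x)) / (((p : ℂ) - q) * x)

/-- Iterated `(p,q)`-derivative `D_{p,q}^{(k)}`. -/
noncomputable def pqDerivIter (p q : ℝ) : ℕ → (ℂ → ℂ) → (ℂ → ℂ)
  | 0, f => f
  | k + 1, f => pqDeriv p q (pqDerivIter p q k f)

/-- The complex `(p,q)`-Lorentz polynomial
`L_{n,p,q}(f)(z) = Σ_{k=0}^{n} q^{k(k-1)/2} binom(n,k)_{p,q} (z/[n]_{p,q})^k D_{p,q}^{(k)}f(0)`. -/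
noncomputable def lorentz (p q : ℝ) (n : ℕ) (f : ℂ → ℂ) (z : ℂ) : ℂ :=
  ∑ k ∈ Finset.range (n + 1),
    (q : ℂ) ^ (k * (k - 1) / 2) * (pqBinom p q n k : ℂ) *
      (z / (pqInt p q n : ℂ)) ^ k * pqDerivIter p q k f 0

open Finset

section PQInt

variable {p q : ℝ}

@[simp]
lemma pqInt_zero : pqInt p q 0 = 0 := by simp [pqInt]

lemma pqInt_one (hpq : p ≠ q) : pqInt p q 1 = 1 := by
  simp [pqInt, div_self (sub_ne_zero.2 hpq.symm)]

lemma pqInt_add (m n : ℕ) : pqInt p q (m + n) = q ^ m * pqInt p q n + p ^ n * pqInt p q m := by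
  simp only [pqInt]
  field_simp
  ring

lemma pqInt_pos (hp : 0 ≤ p) (hpq : p < q) {n : ℕ} (hn : n ≠ 0) : 0 < pqInt p q n :=
  div_pos (sub_pos.2 (pow_lt_pow_left₀ hpq hp hn)) (sub_pos.2 hpq)

lemma pqInt_nonneg (hp : 0 ≤ p) (hpq : p < q) (n : ℕ) : 0 ≤ pqInt p q n := by
  rcases eq_or_ne n 0 with rfl | hn
  · simp
  · exact (pqInt_pos hp hpq hn).le

lemma pqFact_pos (hp : 0 ≤ p) (hpq : p < q) (n : ℕ) : 0 < pqFact p q n := by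
  induction n with
  | zero => exact one_pos
  | succ n ih => exact mul_pos ih (pqInt_pos hp hpq n.succ_ne_zero)

lemma pqFact_eq_prod (n : ℕ) : pqFact p q n = ∏ i ∈ range n, pqInt p q (i + 1) := by
  induction n with
  | zero => rfl
  | succ n ih => rw [prod_range_succ, ← ih]; rfl

lemma pqFact_eq_prod_mul_pqFact_sub {k n : ℕ} (hk : k ≤ n) :
    pqFact p q n = (∏ j ∈ range k, pqInt p q (n - j)) * pqFact p q (n - k) := by
  induction k with
  | zero => simp
  | succ k ih =>
    have hfact : pqFact p q (n - k) = pqFact p q (n - (k + 1)) * pqInt p q (n - k) := by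
      rw [show n - k = n - (k + 1) + 1 by omega]
      rfl
    rw [ih (by omega), hfact, prod_range_succ]
    ring

end PQInt

lemma hasSum_mul_zero_pow (b : ℕ → ℂ) : HasSum (fun j => b j * 0 ^ j) (b 0) := by
  convert hasSum_ite_eq 0 (b 0) using 2 with j
  rcases eq_or_ne j 0 with rfl | hj <;> simp [*]

section PowerSeries

variable {g : ℂ → ℂ} {b : ℕ → ℂ} {ρ : ℝ}

lemma hasFPowerSeriesOnBall_ofScalars_of_hasSum (hρ : 0 < ρ)
    (h : ∀ x : ℂ, ‖x‖ < ρ → HasSum (fun j => b j * x ^ j) (g x)) :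
    HasFPowerSeriesOnBall g (FormalMultilinearSeries.ofScalars ℂ b) 0 (ENNReal.ofReal ρ) := by
  refine ⟨ENNReal.le_of_forall_nnreal_lt fun t ht => ?_, by simpa using hρ, fun {y} hy => ?_⟩
  · have htρ : (t : ℝ) < ρ := by
      rwa [← ENNReal.ofReal_coe_nnreal, ENNReal.ofReal_lt_ofReal_iff hρ] at ht
    refine FormalMultilinearSeries.le_radius_of_summable_norm _ ?_
    refine (h t (by simpa using htρ)).summable.norm.congr fun j => ?_
    simp
  · rw [Metric.mem_eball, edist_zero_right, ← ofReal_norm, ENNReal.ofReal_lt_ofReal_iff hρ] at hy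
    simpa [FormalMultilinearSeries.ofScalars_apply_eq, mul_comm] using h y hy

lemma deriv_zero_eq_of_hasSum (hρ : 0 < ρ)
    (h : ∀ x : ℂ, ‖x‖ < ρ → HasSum (fun j => b j * x ^ j) (g x)) : deriv g 0 = b 1 := by
  simp [(hasFPowerSeriesOnBall_ofScalars_of_hasSum hρ h).hasFPowerSeriesAt.deriv]

end PowerSeries

section PQDeriv

variable {p q : ℝ} (hp : 0 ≤ p) (hpq : p < q)
include hp hpq

lemma hasSum_pqDeriv {g : ℂ → ℂ} {b : ℕ → ℂ} {ρ : ℝ}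
    (h : ∀ x : ℂ, ‖x‖ < ρ → HasSum (fun j => b j * x ^ j) (g x)) {x : ℂ} (hx : ‖x‖ < ρ / q) :
    HasSum (fun j => (pqInt p q (j + 1) : ℂ) * b (j + 1) * x ^ j) (pqDeriv p q g x) := by
  have hq : 0 < q := hp.trans_lt hpq
  have hqx : q * ‖x‖ < ρ := by rwa [lt_div_iff₀ hq, mul_comm] at hx
  rcases eq_or_ne x 0 with rfl | hx0
  · have hρ : 0 < ρ := by simpa using hqx
    rw [pqDeriv, if_pos rfl, deriv_zero_eq_of_hasSum hρ h]
    simpa [pqInt_one hpq.ne] using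
      hasSum_mul_zero_pow (fun j => (pqInt p q (j + 1) : ℂ) * b (j + 1))
  · have hpx : ‖(p : ℂ) * x‖ < ρ := by
      rw [norm_mul, Complex.norm_real, Real.norm_of_nonneg hp]
      nlinarith [norm_nonneg x]
    have hqx' : ‖(q : ℂ) * x‖ < ρ := by
      rwa [norm_mul, Complex.norm_real, Real.norm_of_nonneg hq.le]
    have hdiff := ((h _ hpx).sub (h _ hqx')).div_const (((p : ℂ) - q) * x)
    rw [← hasSum_nat_add_iff' 1] at hdiff
    have hpqC : (p : ℂ) - q ≠ 0 := sub_ne_zero.2 (by exact_mod_cast hpq.ne)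
    have hqpC : (q : ℂ) - p ≠ 0 := sub_ne_zero.2 (by exact_mod_cast hpq.ne')
    simp only [range_one, sum_singleton, pow_zero, mul_one, sub_self, zero_div, sub_zero] at hdiff
    rw [pqDeriv, if_neg hx0]
    refine hdiff.congr_fun fun j => ?_
    rw [pqInt]
    push_cast
    field_simp
    ring

lemma hasSum_pqDerivIter {f : ℂ → ℂ} {a : ℕ → ℂ} {R : ℝ}
    (h : ∀ x : ℂ, ‖x‖ < R → HasSum (fun j => a j * x ^ j) (f x)) (k : ℕ) {x : ℂ}
    (hx : ‖x‖ < R / q ^ k) :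
    HasSum (fun j => (∏ i ∈ range k, (pqInt p q (j + i + 1) : ℂ)) * a (j + k) * x ^ j)
      (pqDerivIter p q k f x) := by
  induction k generalizing x with
  | zero => simpa [pqDerivIter] using h x (by simpa using hx)
  | succ k ih =>
    refine (hasSum_pqDeriv hp hpq (fun y hy => ih hy) (by rwa [div_div, ← pow_succ])).congr_fun
      fun j => ?_
    rw [prod_range_succ', show j + (k + 1) = j + 1 + k by omega]
    simp only [add_assoc, add_comm 1, zero_add]
    ring

lemma pqDerivIter_apply_zero {f : ℂ → ℂ} {a : ℕ → ℂ} {R : ℝ} (hR : 0 < R)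
    (h : ∀ x : ℂ, ‖x‖ < R → HasSum (fun j => a j * x ^ j) (f x)) (k : ℕ) :
    pqDerivIter p q k f 0 = pqFact p q k * a k := by
  have hq : 0 < q := hp.trans_lt hpq
  refine (hasSum_pqDerivIter hp hpq h k (by simpa using div_pos hR (pow_pos hq k))).unique ?_
  simpa [pqFact_eq_prod, add_comm] using
    hasSum_mul_zero_pow (fun j => (∏ i ∈ range k, (pqInt p q (j + i + 1) : ℂ)) * a (j + k))

end PQDeriv

lemma one_sub_prod_le_sum_one_sub {ι R : Type*} [CommRing R] [LinearOrder R] [IsStrictOrderedRing R]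
    (s : Finset ι) {f : ι → R} (h0 : ∀ i ∈ s, 0 ≤ f i) (h1 : ∀ i ∈ s, f i ≤ 1) :
    1 - ∏ i ∈ s, f i ≤ ∑ i ∈ s, (1 - f i) := by
  classical
  induction s using Finset.induction_on with
  | empty => simp
  | insert a s ha ih =>
    simp only [mem_insert, forall_eq_or_imp] at h0 h1
    rw [prod_insert ha, sum_insert ha]
    have hP := prod_le_one h0.2 h1.2
    nlinarith [ih h0.2 h1.2, h0.1, h1.1]

lemma geom_sum_le_pow_div_sub_one {K : Type*} [Field K] [LinearOrder K] [IsStrictOrderedRing K]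
    {x : K} (hx : 1 < x) (k : ℕ) : ∑ j ∈ range k, x ^ j ≤ x ^ k / (x - 1) := by
  rw [geom_sum_eq hx.ne']
  gcongr
  linarith

lemma summable_norm_mul_succ_mul_pow_of_hasSum {f : ℂ → ℂ} {c : ℕ → ℂ} {R ρ : ℝ}
    (hf : ∀ z : ℂ, ‖z‖ < R → HasSum (fun k => c k * z ^ k) (f z)) (hρ : 0 ≤ ρ) (hρR : ρ < R) :
    Summable fun k : ℕ => ‖c k‖ * (k + 1) * ρ ^ k := by
  obtain ⟨t, hρt, htR⟩ := exists_between hρR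
  have ht : 0 < t := hρ.trans_lt hρt
  obtain ⟨M, hM⟩ :=
    (hf t (by simpa [abs_of_pos ht])).summable.norm.tendsto_atTop_zero.bddAbove_range
  have hρt' : ‖ρ / t‖ < 1 := by
    rwa [Real.norm_of_nonneg (by positivity), div_lt_one ht]
  have hgeom : Summable fun k : ℕ => ((k : ℝ) + 1) * (ρ / t) ^ k := by
    simpa [add_mul] using
      (summable_pow_mul_geometric_of_norm_lt_one 1 hρt').add
        (summable_geometric_of_norm_lt_one hρt')
  refine Summable.of_nonneg_of_le (fun k => by positivity) (fun k => ?_) (hgeom.mul_left M)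
  calc ‖c k‖ * (k + 1) * ρ ^ k = ‖c k * (t : ℂ) ^ k‖ * ((k + 1) * (ρ / t) ^ k) := by
        rw [norm_mul, norm_pow, Complex.norm_real, Real.norm_of_nonneg ht.le, div_pow]
        field_simp
    _ ≤ M * ((k + 1) * (ρ / t) ^ k) := by gcongr; exact hM ⟨k, rfl⟩

/-- `L_{n,p,q}(e_k) = λ_{n,k} e_k`; for `k > n` the factor `[n - n]_{p,q} = 0` makes it vanish. -/
noncomputable def lorentzCoeff (p q : ℝ) (n k : ℕ) : ℝ :=
  ∏ j ∈ range k, q ^ j * pqInt p q (n - j) / pqInt p q n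

section LorentzCoeff

variable {p q : ℝ} {n k : ℕ}

lemma lorentzCoeff_eq_zero_of_lt (h : n < k) : lorentzCoeff p q n k = 0 :=
  prod_eq_zero (mem_range.2 h) (by simp)

lemma lorentzCoeff_eq (hp : 0 ≤ p) (hpq : p < q) (hk : k ≤ n) :
    lorentzCoeff p q n k =
      q ^ (k * (k - 1) / 2) * pqBinom p q n k * pqFact p q k / pqInt p q n ^ k := by
  rw [lorentzCoeff, prod_div_distrib, prod_mul_distrib, prod_pow_eq_pow_sum, sum_range_id,
    prod_const, card_range, pqBinom, pqFact_eq_prod_mul_pqFact_sub (p := p) (q := q) hk]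
  field_simp [(pqFact_pos hp hpq k).ne', (pqFact_pos hp hpq (n - k)).ne']

lemma hasSum_lorentz (hp : 0 ≤ p) (hpq : p < q) {R : ℝ} (hR : 0 < R) {f : ℂ → ℂ} {c : ℕ → ℂ}
    (hf : ∀ z : ℂ, ‖z‖ < R → HasSum (fun k => c k * z ^ k) (f z)) (n : ℕ) (z : ℂ) :
    HasSum (fun k => (lorentzCoeff p q n k : ℂ) * (c k * z ^ k)) (lorentz p q n f z) := by
  convert hasSum_sum_of_ne_finset_zero (L := SummationFilter.unconditional ℕ)
    (f := fun k => (lorentzCoeff p q n k : ℂ) * (c k * z ^ k)) (s := range (n + 1)) fun k hk => by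
    rw [lorentzCoeff_eq_zero_of_lt (by simpa [Nat.lt_succ_iff] using hk)]; simp
  refine sum_congr rfl fun k hk => ?_
  rw [pqDerivIter_apply_zero hp hpq hR hf,
    lorentzCoeff_eq hp hpq (by simpa [Nat.lt_succ_iff] using hk)]
  push_cast
  ring

lemma pow_mul_pqInt_sub_le (hp : 0 ≤ p) (hpq : p < q) (n j : ℕ) :
    q ^ j * pqInt p q (n - j) ≤ pqInt p q n := by
  rcases le_or_gt j n with hj | hj
  · have hadd := pqInt_add (p := p) (q := q) j (n - j)
    rw [Nat.add_sub_cancel' hj] at hadd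
    rw [hadd]
    have := pqInt_nonneg hp hpq j
    have := pow_nonneg hp (n - j)
    nlinarith
  · simpa [Nat.sub_eq_zero_of_le hj.le] using pqInt_nonneg hp hpq n

lemma pow_mul_pqInt_sub_div_mem_Icc (hp : 0 ≤ p) (hpq : p < q) (n j : ℕ) :
    q ^ j * pqInt p q (n - j) / pqInt p q n ∈ Set.Icc 0 1 :=
  ⟨div_nonneg (mul_nonneg (pow_nonneg (hp.trans hpq.le) j) (pqInt_nonneg hp hpq _))
    (pqInt_nonneg hp hpq n),
    div_le_one_of_le₀ (pow_mul_pqInt_sub_le hp hpq n j) (pqInt_nonneg hp hpq n)⟩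

lemma lorentzCoeff_le_one (hp : 0 ≤ p) (hpq : p < q) : lorentzCoeff p q n k ≤ 1 :=
  prod_le_one (fun j _ => (pow_mul_pqInt_sub_div_mem_Icc hp hpq n j).1)
    fun j _ => (pow_mul_pqInt_sub_div_mem_Icc hp hpq n j).2

lemma sub_mul_pqInt_sub_pow_mul_pqInt_le (hp : 0 < p) (hpq : p < q) (n j : ℕ) :
    (q - p) * (pqInt p q n - q ^ j * pqInt p q (n - j)) ≤ p ^ n * (q / p) ^ j := by
  have hqp : q - p ≠ 0 := sub_ne_zero.2 hpq.ne'
  rcases le_or_gt j n with hj | hj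
  · have hdiff : pqInt p q n - q ^ j * pqInt p q (n - j) = p ^ (n - j) * pqInt p q j := by
      have hadd := pqInt_add (p := p) (q := q) j (n - j)
      rw [Nat.add_sub_cancel' hj] at hadd
      rw [hadd]
      ring
    calc (q - p) * (pqInt p q n - q ^ j * pqInt p q (n - j))
        ≤ p ^ (n - j) * q ^ j := by
          rw [hdiff, pqInt, mul_left_comm, mul_div_cancel₀ _ hqp]
          gcongr
          linarith [pow_nonneg hp.le j]
      _ = p ^ n * (q / p) ^ j := by
          rw [div_pow, ← Nat.sub_add_cancel hj, pow_add, Nat.add_sub_cancel]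
          field_simp
  · calc (q - p) * (pqInt p q n - q ^ j * pqInt p q (n - j))
        ≤ q ^ n := by
          rw [Nat.sub_eq_zero_of_le hj.le, pqInt_zero, mul_zero, sub_zero, pqInt,
            mul_div_cancel₀ _ hqp]
          linarith [pow_nonneg hp.le n]
      _ = p ^ n * (q / p) ^ n := by rw [div_pow]; field_simp
      _ ≤ p ^ n * (q / p) ^ j := by
          gcongr
          exact (one_le_div hp).2 hpq.le

lemma one_sub_lorentzCoeff_le (hp : 0 < p) (hpq : p < q) (hn : n ≠ 0) (k : ℕ) :
    1 - lorentzCoeff p q n k ≤ p ^ n / pqInt p q n * (p / (q - p) ^ 2) * (q / p) ^ k := by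
  have hN := pqInt_pos hp.le hpq hn
  have hqp : 0 < q - p := sub_pos.2 hpq
  have hqp1 : 1 < q / p := (one_lt_div hp).2 hpq
  calc 1 - lorentzCoeff p q n k
      ≤ ∑ j ∈ range k, (1 - q ^ j * pqInt p q (n - j) / pqInt p q n) :=
        one_sub_prod_le_sum_one_sub _ (fun j _ => (pow_mul_pqInt_sub_div_mem_Icc hp.le hpq n j).1)
          fun j _ => (pow_mul_pqInt_sub_div_mem_Icc hp.le hpq n j).2
    _ ≤ ∑ j ∈ range k, p ^ n / ((q - p) * pqInt p q n) * (q / p) ^ j := by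
        refine sum_le_sum fun j _ => ?_
        rw [one_sub_div hN.ne', div_mul_eq_mul_div, le_div_iff₀ (by positivity),
          div_mul_eq_mul_div, div_le_iff₀ hN]
        nlinarith [sub_mul_pqInt_sub_pow_mul_pqInt_le hp hpq n j]
    _ = p ^ n / ((q - p) * pqInt p q n) * ∑ j ∈ range k, (q / p) ^ j := (mul_sum ..).symm
    _ ≤ p ^ n / ((q - p) * pqInt p q n) * ((q / p) ^ k / (q / p - 1)) := by
        gcongr
        exact geom_sum_le_pow_div_sub_one hqp1 k
    _ = p ^ n / pqInt p q n * (p / (q - p) ^ 2) * (q / p) ^ k := by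
        rw [div_sub_one hp.ne']
        field_simp

lemma norm_lorentzCoeff_mul_sub_le (hp : 0 < p) (hpq : p < q) (hn : n ≠ 0) {z : ℂ} {ρ : ℝ}
    (hz : q / p * ‖z‖ ≤ ρ) (k : ℕ) (a : ℂ) :
    ‖(lorentzCoeff p q n k : ℂ) * (a * z ^ k) - a * z ^ k‖ ≤
      p ^ n / pqInt p q n * (p * (q - p + 1) / (q - p) ^ 2) * (‖a‖ * (k + 1) * ρ ^ k) := by
  have hq : 0 < q := hp.trans hpq
  have hρ : 0 ≤ ρ := le_trans (by positivity) hz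
  have hA : 0 ≤ p ^ n / pqInt p q n * (p / (q - p) ^ 2) :=
    mul_nonneg (div_nonneg (by positivity) (pqInt_nonneg hp.le hpq n)) (by positivity)
  have hslack : 1 ≤ (q - p + 1) * (k + 1) :=
    one_le_mul_of_one_le_of_one_le (by linarith) (by linarith [k.cast_nonneg (α := ℝ)])
  rw [show (lorentzCoeff p q n k : ℂ) * (a * z ^ k) - a * z ^ k =
      ((lorentzCoeff p q n k - 1 : ℝ) : ℂ) * (a * z ^ k) by push_cast; ring,
    norm_mul, Complex.norm_real, Real.norm_eq_abs, abs_sub_comm,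
    abs_of_nonneg (sub_nonneg.2 (lorentzCoeff_le_one hp.le hpq))]
  calc (1 - lorentzCoeff p q n k) * ‖a * z ^ k‖
      ≤ p ^ n / pqInt p q n * (p / (q - p) ^ 2) * (q / p) ^ k * ‖a * z ^ k‖ := by
        gcongr
        exact one_sub_lorentzCoeff_le hp hpq hn k
    _ = p ^ n / pqInt p q n * (p / (q - p) ^ 2) * (‖a‖ * (q / p * ‖z‖) ^ k) := by
        rw [norm_mul, norm_pow, mul_pow]; ring
    _ ≤ p ^ n / pqInt p q n * (p / (q - p) ^ 2) * (‖a‖ * ρ ^ k) := by gcongr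
    _ ≤ p ^ n / pqInt p q n * (p / (q - p) ^ 2) * (‖a‖ * ρ ^ k * ((q - p + 1) * (k + 1))) :=
        mul_le_mul_of_nonneg_left (le_mul_of_one_le_right (by positivity) hslack) hA
    _ = _ := by ring

end LorentzCoeff

theorem lorentz_upper_estimate_general (R p q r r₁ : ℝ) (hp : 1 < p) (hpq : p < q)
    (hrr₁ : r < p * r₁ / q) (hr₁R : p * r₁ / q < p * R / q)
    (f : ℂ → ℂ) (c : ℕ → ℂ)
    (hf : ∀ z : ℂ, ‖z‖ < R → HasSum (fun k => c k * z ^ k) (f z)) :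
    ∀ n : ℕ, 1 ≤ n → ∀ z : ℂ, ‖z‖ ≤ r →
      ‖lorentz p q n f z - f z‖ ≤
        p ^ n / pqInt p q n *
          (p * (q - p + 1) / (q - p) ^ 2 * ∑' k : ℕ, ‖c k‖ * (k + 1 : ℝ) * r₁ ^ k) := by
  intro n hn z hz
  have hp0 : 0 < p := by linarith
  have hq0 : 0 < q := by linarith
  have hzr₁ : q / p * ‖z‖ < r₁ := by
    rw [lt_div_iff₀ hq0] at hrr₁
    rw [div_mul_eq_mul_div, div_lt_iff₀ hp0]
    nlinarith
  have hr₁ : 0 < r₁ := lt_of_le_of_lt (by positivity) hzr₁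
  have hr₁R' : r₁ < R := lt_of_mul_lt_mul_left ((div_lt_div_iff_of_pos_right hq0).1 hr₁R) hp0.le
  have hzR : ‖z‖ < R := by
    have : ‖z‖ ≤ q / p * ‖z‖ := le_mul_of_one_le_left (norm_nonneg z) ((one_le_div hp0).2 hpq.le)
    linarith
  rw [← mul_assoc]
  exact ((hasSum_lorentz hp0.le hpq (hr₁.trans hr₁R') hf n z).sub (hf z hzR)).norm_le_of_bounded
    ((summable_norm_mul_succ_mul_pow_of_hasSum hf hr₁.le hr₁R').hasSum.mul_left _)
    fun k => norm_lorentzCoeff_mul_sub_le hp0 hpq (by omega) hzr₁.le k (c k)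

theorem lorentz_upper_estimate (R p q r r₁ : ℝ) (hp : 1 < p) (hpq : p < q) (hqR : q < R)
    (hr : 1 ≤ r) (hrr₁ : r < p * r₁ / q) (hr₁R : p * r₁ / q < p * R / q)
    (f : ℂ → ℂ) (c : ℕ → ℂ)
    (hf : ∀ z : ℂ, ‖z‖ < R → HasSum (fun k => c k * z ^ k) (f z)) :
    ∀ n : ℕ, 1 ≤ n → ∀ z : ℂ, ‖z‖ ≤ r →
      ‖lorentz p q n f z - f z‖ ≤
        p ^ n / pqInt p q n *
          (p * (q - p + 1) / (q - p) ^ 2 * ∑' k : ℕ, ‖c k‖ * (k + 1 : ℝ) * r₁ ^ k) :=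
  lorentz_upper_estimate_general R p q r r₁ hp hpq hrr₁ hr₁R f c hf
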